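/- arXiv:2503.12987 — 2 statements merged into one kernel-verified Lean document; each statement's English description precedes it below -/
import Mathlib

section
/- Let a ≤ b be real numbers, let u : ℝ → ℝ be continuous on [a,b], let x : ℝ → ℝ have derivative u(t) at every t ∈ [a,b], and let μ be the occupation measure of the trajectory, i.e. the pushforward of Lebesgue measure restricted to [a,b] under the map t ↦ (t, x(t), u(t)), a measure on ℝ³. Then for every continuously differentiable v : ℝ × ℝ → ℝ, ∫_{ℝ³} (∂v/∂t(t,x) + ∂v/∂x(t,x)·u) dμ(t,x,u) = v(b, x(b)) - v(a, x(a)). -/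
/-!
Along the trajectory, `t ↦ v (t, x t)` has derivative `∂v/∂t + ∂v/∂x · u` by the chain rule, so
after pushing the integral back to `[a, b]` the identity is the fundamental theorem of calculus.
-/

open MeasureTheory Set

theorem HasDerivAt.comp_graph {E F : Type*} [NormedAddCommGroup E] [NormedSpace ℝ E]
    [NormedAddCommGroup F] [NormedSpace ℝ F] {v : ℝ × E → F} {x : ℝ → E} {x' : E} {t : ℝ}
    (hv : DifferentiableAt ℝ v (t, x t)) (hx : HasDerivAt x x' t) :
    HasDerivAt (fun s => v (s, x s))
      (fderiv ℝ v (t, x t) (1, 0) + fderiv ℝ v (t, x t) (0, x')) t := by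
  rw [← map_add, Prod.mk_add_mk, add_zero, zero_add]
  exact hv.hasFDerivAt.comp_hasDerivAt t ((hasDerivAt_id t).prodMk hx)

theorem integral_map_restrict_Icc {X : Type*} [TopologicalSpace X] [MeasurableSpace X]
    [BorelSpace X] [SecondCountableTopology X] {a b : ℝ} (hab : a ≤ b) {γ : ℝ → X}
    (hγ : ContinuousOn γ (Icc a b)) {f : X → ℝ} (hf : Continuous f) :
    ∫ p, f p ∂(volume.restrict (Icc a b)).map γ = ∫ t in a..b, f (γ t) := by
  rw [integral_map (hγ.aemeasurable measurableSet_Icc) hf.aestronglyMeasurable,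
    integral_Icc_eq_integral_Ioc, intervalIntegral.integral_of_le hab]

/-- Weak Liouville equation for occupation measures: if `μ` is the pushforward of
Lebesgue measure on `[a,b]` under `t ↦ (t, x t, u t)`, where `x` has derivative
`u t` at every `t ∈ [a,b]` and `u` is continuous on `[a,b]`, then for every `C¹`
test function `v`,
`∫ (∂v/∂t(t,x) + ∂v/∂x(t,x)·u) dμ(t,x,u) = v(b, x(b)) - v(a, x(a))`. -/
theorem occupation_measure_liouville
    (a b : ℝ) (hab : a ≤ b) (u x : ℝ → ℝ)
    (hu : ContinuousOn u (Set.Icc a b))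
    (hx : ∀ t ∈ Set.Icc a b, HasDerivAt x (u t) t)
    (μ : Measure (ℝ × ℝ × ℝ))
    (hμ : μ = Measure.map (fun t => (t, x t, u t)) (volume.restrict (Set.Icc a b)))
    (v : ℝ × ℝ → ℝ) (hv : ContDiff ℝ 1 v) :
    ∫ p : ℝ × ℝ × ℝ,
        (fderiv ℝ v (p.1, p.2.1) (1, 0) + fderiv ℝ v (p.1, p.2.1) (0, 1) * p.2.2) ∂μ
      = v (b, x b) - v (a, x a) := by
  have hxc : ContinuousOn x (Icc a b) := fun t ht => (hx t ht).continuousAt.continuousWithinAt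
  have hv' : Continuous (fderiv ℝ v) := hv.continuous_fderiv one_ne_zero
  have hγ : ContinuousOn (fun t => (t, x t, u t)) (Icc a b) :=
    continuousOn_id.prodMk (hxc.prodMk hu)
  rw [hμ, integral_map_restrict_Icc hab hγ (by fun_prop)]
  refine intervalIntegral.integral_eq_sub_of_hasDerivAt (f := fun s => v (s, x s))
    (fun t ht => ?_) ?_
  · rw [uIcc_of_le hab] at ht
    have hderiv := (hx t ht).comp_graph (hv.differentiable one_ne_zero _)
    have hvert : ((0 : ℝ), u t) = u t • ((0 : ℝ), (1 : ℝ)) := by simp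
    rwa [hvert, map_smul, smul_eq_mul, mul_comm] at hderiv
  · refine ContinuousOn.intervalIntegrable ?_
    rw [uIcc_of_le hab]
    fun_prop (disch := assumption)
end

section
/- (Bounded mass.) Let r be an even positive integer, a ≤ b, x₋ ≤ x₊, x_a, x_b, C real numbers, and let ν be a finite Borel measure on ℝ⁴ (coordinates (t,x,z,w)) such that ν-almost everywhere t ∈ [a,b], x ∈ [x₋,x₊], z^r + w^r = 1 and w ≥ 0. Assume that for every continuously differentiable v : ℝ × ℝ → ℝ the function (t,x,z,w) ↦ w^r·∂v/∂t(t,x) + z·w^{r-1}·∂v/∂x(t,x) is ν-integrable with ∫ (w^r·∂v/∂t(t,x) + z·w^{r-1}·∂v/∂x(t,x)) dν = v(b, x_b) - v(a, x_a), and that ∫ z^r dν ≤ C. Then the total mass of ν satisfies ν(ℝ⁴) ≤ C + b - a. -/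
open MeasureTheory

/-!
Testing the Liouville constraint with `v(t,x) = t` gives `∫ w^r dν = b - a`. Since `z^r + w^r = 1`
on the support, the total mass of `ν` is `∫ z^r dν + ∫ w^r dν ≤ C + (b - a)`.
-/

theorem integral_eq_measureReal_univ_sub {α : Type*} [MeasurableSpace α] {μ : Measure α}
    [IsFiniteMeasure μ] {f g : α → ℝ} (hfg : ∀ᵐ x ∂μ, f x + g x = 1) (hg : Integrable g μ) :
    ∫ x, f x ∂μ = μ.real Set.univ - ∫ x, g x ∂μ := by
  have hf : f =ᵐ[μ] fun x => 1 - g x := hfg.mono fun x hx => by linarith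
  rw [integral_congr_ae hf, integral_sub (integrable_const 1) hg, integral_const, smul_eq_mul,
    mul_one]

theorem liouville_integrand_fst (r : ℕ) (q : ℝ × ℝ × ℝ × ℝ) :
    q.2.2.2 ^ r * fderiv ℝ (fun p : ℝ × ℝ => p.1) (q.1, q.2.1) (1, 0)
      + q.2.2.1 * q.2.2.2 ^ (r - 1) * fderiv ℝ (fun p : ℝ × ℝ => p.1) (q.1, q.2.1) (0, 1)
      = q.2.2.2 ^ r := by
  simp [fderiv_fst]

theorem mass_bound_general
    (r : ℕ)
    (a b xlo xhi xa xb C : ℝ)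
    (ν : Measure (ℝ × ℝ × ℝ × ℝ)) [IsFiniteMeasure ν]
    (hae : ∀ᵐ q ∂ν, q.1 ∈ Set.Icc a b ∧ q.2.1 ∈ Set.Icc xlo xhi ∧
      q.2.2.1 ^ r + q.2.2.2 ^ r = 1 ∧ 0 ≤ q.2.2.2)
    (hLiouville : ∀ v : ℝ × ℝ → ℝ, ContDiff ℝ 1 v →
      Integrable (fun q : ℝ × ℝ × ℝ × ℝ =>
        q.2.2.2 ^ r * fderiv ℝ v (q.1, q.2.1) (1, 0)
          + q.2.2.1 * q.2.2.2 ^ (r - 1) * fderiv ℝ v (q.1, q.2.1) (0, 1)) ν ∧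
      ∫ q : ℝ × ℝ × ℝ × ℝ,
          (q.2.2.2 ^ r * fderiv ℝ v (q.1, q.2.1) (1, 0)
            + q.2.2.1 * q.2.2.2 ^ (r - 1) * fderiv ℝ v (q.1, q.2.1) (0, 1)) ∂ν
        = v (b, xb) - v (a, xa))
    (hmom : ∫ q : ℝ × ℝ × ℝ × ℝ, q.2.2.1 ^ r ∂ν ≤ C) :
    (ν Set.univ).toReal ≤ C + b - a := by
  obtain ⟨hint, htime⟩ := hLiouville (fun p => p.1) contDiff_fst
  simp only [liouville_integrand_fst] at hint htime
  have hmass := integral_eq_measureReal_univ_sub (hae.mono fun q hq => hq.2.2.1) hint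
  rw [htime] at hmass
  rw [← measureReal_def]
  linarith

/-- Bounded mass: any finite Borel measure `ν` supported (a.e.) on
`[a,b] × [x₋,x₊] × B_r` which satisfies the weak polynomial-data Liouville
constraint and the moment constraint `∫ z^r dν ≤ C` has total mass at most
`C + b - a`. -/
theorem mass_bound
    (r : ℕ) (hr : 0 < r) (hre : Even r)
    (a b xlo xhi xa xb C : ℝ) (hab : a ≤ b) (hx : xlo ≤ xhi)
    (ν : Measure (ℝ × ℝ × ℝ × ℝ)) [IsFiniteMeasure ν]
    (hae : ∀ᵐ q ∂ν, q.1 ∈ Set.Icc a b ∧ q.2.1 ∈ Set.Icc xlo xhi ∧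
      q.2.2.1 ^ r + q.2.2.2 ^ r = 1 ∧ 0 ≤ q.2.2.2)
    (hLiouville : ∀ v : ℝ × ℝ → ℝ, ContDiff ℝ 1 v →
      Integrable (fun q : ℝ × ℝ × ℝ × ℝ =>
        q.2.2.2 ^ r * fderiv ℝ v (q.1, q.2.1) (1, 0)
          + q.2.2.1 * q.2.2.2 ^ (r - 1) * fderiv ℝ v (q.1, q.2.1) (0, 1)) ν ∧
      ∫ q : ℝ × ℝ × ℝ × ℝ,
          (q.2.2.2 ^ r * fderiv ℝ v (q.1, q.2.1) (1, 0)
            + q.2.2.1 * q.2.2.2 ^ (r - 1) * fderiv ℝ v (q.1, q.2.1) (0, 1)) ∂ν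
        = v (b, xb) - v (a, xa))
    (hmom : ∫ q : ℝ × ℝ × ℝ × ℝ, q.2.2.1 ^ r ∂ν ≤ C) :
    (ν Set.univ).toReal ≤ C + b - a :=
  mass_bound_general r a b xlo xhi xa xb C ν hae hLiouville hmom
end
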